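/- Let G be an additive subgroup of ℝⁿ (viewed as Fin n → ℝ) equipped with a total order ≻ compatible with addition, and let G₊ = {a ∈ G : a ≻ 0}. Then there exists a linear automorphism e of ℝⁿ such that for all a, b ∈ G, a ≻ b ⇔ toLex(e a) > toLex(e b) (i.e., ≻ is induced by a lexicographic order on ℝⁿ) if and only if 0 does not belong to the convex hull of G₊ in ℝⁿ. -/

import Mathlib

open Module Set

theorem lex_lt_iff' {m : ℕ} {x y : Fin m → ℝ} :
    toLex x < toLex y ↔ ∃ i, (∀ j, j < i → x j = y j) ∧ x i < y i := Iff.rfl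

theorem lex_smul_pos {m : ℕ} {t : ℝ} (ht : 0 < t) {v : Fin m → ℝ}
    (hv : toLex (0 : Fin m → ℝ) < toLex v) : toLex (0 : Fin m → ℝ) < toLex (t • v) := by
  obtain ⟨i, h1, h2⟩ := lex_lt_iff'.mp hv
  refine lex_lt_iff'.mpr ⟨i, fun j hj => ?_, ?_⟩
  · have := (h1 j hj).symm
    simp only [Pi.zero_apply] at this ⊢
    simp [Pi.smul_apply, this]
  · simp only [Pi.zero_apply] at h2 ⊢
    simpa [Pi.smul_apply] using mul_pos ht h2

theorem lex_pos_convex {m : ℕ} : Convex ℝ {v : Fin m → ℝ | toLex 0 < toLex v} := by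
  intro x hx y hy a b ha hb hab
  rcases ha.eq_or_lt with rfl | ha'
  · have hb1 : b = 1 := by linarith
    simpa [hb1] using hy
  rcases hb.eq_or_lt with rfl | hb'
  · have ha1 : a = 1 := by linarith
    simpa [ha1] using hx
  have h1 := lex_smul_pos ha' hx
  have h2 := lex_smul_pos hb' hy
  have := add_pos (a := toLex (a • x)) (b := toLex (b • y)) h1 h2
  exact this



theorem sep_lemma {E : Type} [NormedAddCommGroup E] [InnerProductSpace ℝ E]
    [FiniteDimensional ℝ E] [Nontrivial E] {P : Set E}
    (hP : (0:E) ∉ convexHull ℝ P) :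
    ∃ f : E →ₗ[ℝ] ℝ, f ≠ 0 ∧ ∀ x ∈ P, 0 ≤ f x := by
  rcases P.eq_empty_or_nonempty with rfl | ⟨p, hp⟩
  · obtain ⟨v, hv⟩ := exists_ne (0:E)
    refine ⟨(innerSL ℝ v).toLinearMap, fun h => hv ?_, by simp⟩
    have h0 := LinearMap.congr_fun h v
    simpa [inner_self_eq_zero] using h0
  set s := convexHull ℝ P with hs_def
  have hs : Convex ℝ s := convex_convexHull ℝ P
  by_cases hint : (interior s).Nonempty
  · obtain ⟨f, hf⟩ := geometric_hahn_banach_open_point hs.interior isOpen_interior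
      (fun h => hP (interior_subset h))
    have hf' : ∀ a ∈ interior s, f a < 0 := by simpa using hf
    obtain ⟨a, ha⟩ := hint
    have hfa : f a < 0 := hf' a ha
    refine ⟨-f.toLinearMap, ?_, fun x hx => ?_⟩
    · intro h
      have h0 := LinearMap.congr_fun h a
      simp at h0
      exact absurd hfa (by simp [h0])
    · -- show 0 ≤ -f x for x ∈ P
      have hxs : x ∈ s := subset_convexHull ℝ P hx
      by_contra hneg
      simp only [LinearMap.neg_apply, ContinuousLinearMap.coe_coe, neg_nonneg, not_le] at hneg
      -- hneg : 0 < f x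
      set t : ℝ := f x / (2*(f x - f a)) with ht_def
      have hden : 0 < f x - f a := by linarith
      have ht0 : 0 < t := by positivity
      have ht1 : t < 1 := by
        rw [ht_def, div_lt_one (by linarith)]
        linarith
      have hy : t • a + (1-t) • x ∈ interior s :=
        hs.combo_interior_closure_mem_interior ha (subset_closure hxs) ht0 (by linarith)
          (by ring)
      have := hf' _ hy
      have hfy : f (t • a + (1-t) • x) = t * f a + (1-t) * f x := by
        simp [map_add, map_smul]
      rw [hfy] at this
      have ht : t * (f x - f a) = f x / 2 := by
        rw [ht_def]; field_simp
      nlinarith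
  · have hspan : affineSpan ℝ P ≠ ⊤ := by
      rw [← affineSpan_convexHull]
      intro h
      exact hint (hs.interior_nonempty_iff_affineSpan_eq_top.mpr h)
    obtain ⟨q, hq⟩ : ∃ q, q ∉ affineSpan ℝ P := by
      by_contra h; push_neg at h
      exact hspan (SetLike.ext fun x => ⟨fun _ => trivial, fun _ => h x⟩)
    set D := (affineSpan ℝ P).direction with hD_def
    have hpD : p ∈ affineSpan ℝ P := subset_affineSpan ℝ P hp
    have hD : D ≠ ⊤ := by
      intro h
      apply hq
      have h1 : q - p ∈ D := h ▸ Submodule.mem_top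
      have h2 := AffineSubspace.vadd_mem_of_mem_direction h1 hpD
      simpa [vadd_eq_add, sub_add_cancel] using h2
    have hDbot : Dᗮ ≠ ⊥ := fun h => hD (Submodule.orthogonal_eq_bot_iff.mp h)
    obtain ⟨u, huD, hu0⟩ := Submodule.exists_mem_ne_zero_of_ne_bot hDbot
    have hconst : ∀ x ∈ P, (inner ℝ u x : ℝ) = (inner ℝ u p : ℝ) := by
      intro x hx
      have hxD : x - p ∈ D := by
        have h3 := AffineSubspace.vsub_mem_direction (subset_affineSpan ℝ P hx) hpD
        simpa [vsub_eq_sub] using h3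
      have h4 : (inner ℝ u (x - p) : ℝ) = 0 := Submodule.inner_left_of_mem_orthogonal hxD huD
      rw [inner_sub_right] at h4
      linarith
    rcases le_or_gt 0 ((inner ℝ u p : ℝ)) with hc | hc
    · refine ⟨(innerSL ℝ u).toLinearMap, fun h => hu0 ?_, fun x hx => ?_⟩
      · have h0 := LinearMap.congr_fun h u
        simpa [inner_self_eq_zero] using h0
      · have h5 := hconst x hx
        simp only [ContinuousLinearMap.coe_coe, innerSL_apply_apply]
        rw [h5]; exact hc
    · refine ⟨-(innerSL ℝ u).toLinearMap, fun h => hu0 ?_, fun x hx => ?_⟩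
      · have h0 := LinearMap.congr_fun h u
        simpa [inner_self_eq_zero] using h0
      · have h5 := hconst x hx
        simp only [LinearMap.neg_apply, ContinuousLinearMap.coe_coe, innerSL_apply_apply, neg_nonneg]
        rw [h5]; linarith





theorem key_lemma : ∀ (n : ℕ) (E : Type) [NormedAddCommGroup E] [InnerProductSpace ℝ E]
    [FiniteDimensional ℝ E], finrank ℝ E = n → ∀ P : Set E, (0:E) ∉ convexHull ℝ P →
    ∃ l : E ≃ₗ[ℝ] (Fin n → ℝ), ∀ x ∈ P, toLex (0 : Fin n → ℝ) < toLex (l x) := by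
  intro n
  induction n with
  | zero =>
    intro E _ _ _ hn P hP
    have hsub : Subsingleton E := finrank_zero_iff.mp hn
    have hPempty : P = ∅ := by
      ext x; simp only [mem_empty_iff_false, iff_false]
      intro hx
      exact hP (subset_convexHull ℝ P (by rwa [Subsingleton.elim (0:E) x]))
    exact ⟨LinearEquiv.ofFinrankEq _ _ (by simp [hn, Module.finrank_fin_fun]),
      by simp [hPempty]⟩
  | succ n ih =>
    intro E _ _ _ hn P hP
    have hnt : Nontrivial E := by
      have : 0 < finrank ℝ E := by omega
      exact Module.nontrivial_of_finrank_pos this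
    obtain ⟨f, hf0, hfP⟩ := sep_lemma hP
    obtain ⟨w, hw⟩ : ∃ w, f w ≠ 0 := by
      by_contra h; push_neg at h; exact hf0 (LinearMap.ext fun x => by simp [h x])
    set v := (f w)⁻¹ • w with hv_def
    have hfv : f v = 1 := by
      simp [hv_def, map_smul, inv_mul_cancel₀ hw]
    set K := LinearMap.ker f with hK_def
    have hK : finrank ℝ K = n := by
      have hsurj : Function.Surjective f := by
        intro c; exact ⟨c • v, by simp [map_smul, hfv]⟩
      have hr := LinearMap.finrank_range_add_finrank_ker f
      rw [LinearMap.range_eq_top.mpr hsurj, finrank_top, hn] at hr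
      rw [← hK_def] at hr
      simp only [Module.finrank_self] at hr
      omega
    have hP' : (0 : K) ∉ convexHull ℝ (Subtype.val ⁻¹' P : Set K) := by
      intro h
      apply hP
      have h0 : (0:E) ∈ K.subtype '' (convexHull ℝ (Subtype.val ⁻¹' P)) := ⟨0, h, rfl⟩
      rw [K.subtype.image_convexHull] at h0
      refine convexHull_mono ?_ h0
      intro y hy
      obtain ⟨z, hz, rfl⟩ := hy
      exact hz
    obtain ⟨l', hl'⟩ := ih K hK (Subtype.val ⁻¹' P) hP'
    have hvK : ∀ x : E, x - f x • v ∈ K := fun x => by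
      simp [hK_def, LinearMap.mem_ker, map_sub, map_smul, hfv]
    set π : E →ₗ[ℝ] K :=
      LinearMap.codRestrict K (LinearMap.id - f.smulRight v) (fun x => by simpa using hvK x)
      with hπ_def
    have hπ : ∀ x : E, (π x : E) = x - f x • v := fun x => by
      simp [hπ_def, LinearMap.codRestrict_apply]
    set g : E →ₗ[ℝ] (Fin n → ℝ) := l'.toLinearMap ∘ₗ π with hg_def
    set F : E →ₗ[ℝ] (Fin (n+1) → ℝ) :=
      LinearMap.pi (Fin.cases f (fun i => (LinearMap.proj i) ∘ₗ g)) with hF_def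
    have hF0 : ∀ x, F x 0 = f x := fun x => by
      simp [hF_def, LinearMap.pi_apply]
    have hFs : ∀ x i, F x (Fin.succ i) = g x i := fun x i => by
      simp [hF_def, LinearMap.pi_apply]
    set Finv : (Fin (n+1) → ℝ) →ₗ[ℝ] E :=
      (LinearMap.proj 0).smulRight v +
        K.subtype ∘ₗ l'.symm.toLinearMap ∘ₗ LinearMap.funLeft ℝ ℝ Fin.succ with hFinv_def
    have hFinv : ∀ y : Fin (n+1) → ℝ, Finv y = y 0 • v + (l'.symm (y ∘ Fin.succ) : E) :=
      fun y => by simp [hFinv_def, LinearMap.funLeft]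
    have hGF : ∀ x : E, Finv (F x) = x := by
      intro x
      rw [hFinv, hF0]
      have hcomp : (F x) ∘ Fin.succ = g x := funext fun i => hFs x i
      rw [hcomp]
      have : l'.symm (g x) = π x := by
        simp [hg_def]
      rw [this, hπ]
      abel
    have hFG : ∀ y : Fin (n+1) → ℝ, F (Finv y) = y := by
      intro y
      have hfy : f (Finv y) = y 0 := by
        rw [hFinv]
        have hker : f ((l'.symm (y ∘ Fin.succ) : K) : E) = 0 :=
          LinearMap.mem_ker.mp (l'.symm (y ∘ Fin.succ)).2
        simp [map_add, map_smul, hfv, hker]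
      have hπy : π (Finv y) = l'.symm (y ∘ Fin.succ) := by
        apply Subtype.ext
        rw [hπ, hfy, hFinv]
        abel
      funext i
      refine Fin.cases ?_ ?_ i
      · rw [hF0, hfy]
      · intro j
        rw [hFs]
        simp [hg_def, hπy]
    have hFG' : F ∘ₗ Finv = LinearMap.id := LinearMap.ext fun y => hFG y
    have hGF' : Finv ∘ₗ F = LinearMap.id := LinearMap.ext fun y => hGF y
    refine ⟨LinearEquiv.ofLinear F Finv hFG' hGF', fun x hx => ?_⟩
    rw [LinearEquiv.ofLinear_apply]
    rcases (hfP x hx).eq_or_lt with heq | hlt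
    · -- f x = 0
      have hxK : x ∈ K := by simp [hK_def, LinearMap.mem_ker, ← heq]
      have hπx : π x = ⟨x, hxK⟩ := Subtype.ext (by rw [hπ, ← heq]; simp)
      have hpos := hl' ⟨x, hxK⟩ (by simpa [Set.mem_preimage] using hx)
      obtain ⟨i, h1, h2⟩ := lex_lt_iff'.mp hpos
      refine lex_lt_iff'.mpr ⟨Fin.succ i, fun j => ?_, ?_⟩
      · refine Fin.cases ?_ ?_ j
        · intro _
          simp only [Pi.zero_apply]
          rw [hF0, ← heq]
        · intro j' hj'
          have hji : j' < i := by
            rwa [Fin.succ_lt_succ_iff] at hj'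
          simp only [Pi.zero_apply]
          rw [hFs]
          have := h1 j' hji
          simpa [hg_def, hπx] using this
      · simp only [Pi.zero_apply]
        rw [hFs]
        have h2' := h2
        simpa [hg_def, hπx] using h2'
    · refine lex_lt_iff'.mpr ⟨0, fun j hj => absurd hj (Fin.not_lt_zero j), ?_⟩
      simp only [Pi.zero_apply]
      rw [hF0]
      exact hlt






/-- Let `G` be an additive subgroup of `ℝⁿ` with a total order `≻` (strict total order `r`)
compatible with addition and `G₊ = {a ∈ G : a ≻ 0}`. Then `≻` is induced by the lexicographic
order related to some coordinate system on `ℝⁿ` if and only if `0` does not belong to the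
convex hull of `G₊`. -/
theorem order_induced_by_lex_iff_convexHull
    {n : ℕ} (G : AddSubgroup (Fin n → ℝ)) (r : G → G → Prop)
    (hord : IsStrictTotalOrder G r)
    (hcompat : ∀ x y a : G, r x y → r (x + a) (y + a)) :
    (∃ e : (Fin n → ℝ) ≃ₗ[ℝ] (Fin n → ℝ),
        ∀ a b : G, r a b ↔ toLex (e (b : Fin n → ℝ)) < toLex (e (a : Fin n → ℝ))) ↔
    (0 : Fin n → ℝ) ∉ convexHull ℝ (Subtype.val '' {x : G | r x 0}) := by
  constructor
  · rintro ⟨e, he⟩ hmem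
    have himg : (0 : Fin n → ℝ) ∈
        convexHull ℝ (⇑e.toLinearMap '' (Subtype.val '' {x : G | r x 0})) := by
      rw [← e.toLinearMap.image_convexHull]
      exact ⟨0, hmem, map_zero e⟩
    have hsub : convexHull ℝ (⇑e.toLinearMap '' (Subtype.val '' {x : G | r x 0})) ⊆
        {v : Fin n → ℝ | toLex 0 < toLex v} := by
      apply convexHull_min ?_ lex_pos_convex
      rintro w ⟨y, ⟨a, ha, rfl⟩, rfl⟩
      have h1 := (he a 0).mp ha
      simpa using h1
    have h2 := hsub himg
    simp only [mem_setOf_eq] at h2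
    exact lt_irrefl _ h2
  · intro h0
    set ψ : EuclideanSpace ℝ (Fin n) ≃ₗ[ℝ] (Fin n → ℝ) :=
      WithLp.linearEquiv 2 ℝ (Fin n → ℝ) with hψ_def
    set P : Set (Fin n → ℝ) := Subtype.val '' {x : G | r x 0} with hP_def
    have h0' : (0 : EuclideanSpace ℝ (Fin n)) ∉ convexHull ℝ (⇑ψ.symm '' P) := by
      intro h
      apply h0
      have h1 : (0 : Fin n → ℝ) ∈ ψ.toLinearMap '' (convexHull ℝ (⇑ψ.symm '' P)) :=
        ⟨0, h, map_zero _⟩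
      rw [ψ.toLinearMap.image_convexHull] at h1
      have h2 : ⇑ψ.toLinearMap '' (⇑ψ.symm '' P) = P := by
        ext z
        constructor
        · rintro ⟨y, ⟨w, hw, rfl⟩, rfl⟩
          simpa using hw
        · intro hz
          exact ⟨ψ.symm z, ⟨z, hz, rfl⟩, by simp⟩
      rwa [h2] at h1
    obtain ⟨l, hl⟩ := key_lemma n (EuclideanSpace ℝ (Fin n)) finrank_euclideanSpace_fin
      (⇑ψ.symm '' P) h0'
    set e : (Fin n → ℝ) ≃ₗ[ℝ] (Fin n → ℝ) := ψ.symm.trans l with he_def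
    have hpos : ∀ x : G, r x 0 → toLex (0 : Fin n → ℝ) < toLex (e ↑x) := by
      intro x hx
      exact hl (ψ.symm ↑x) ⟨↑x, ⟨x, hx, rfl⟩, rfl⟩
    have hfwd : ∀ a b : G, r a b → toLex (e (b : Fin n → ℝ)) < toLex (e (a : Fin n → ℝ)) := by
      intro a b hab
      have h1 : r (a - b) 0 := by
        have h2 := hcompat a b (-b) hab
        rwa [add_neg_cancel, ← sub_eq_add_neg] at h2
      have h3 := hpos _ h1
      have h4 : ((a - b : G) : Fin n → ℝ) = (a : Fin n → ℝ) - (b : Fin n → ℝ) := rfl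
      rw [h4, map_sub] at h3
      have h5 : toLex (e (a : Fin n → ℝ) - e (b : Fin n → ℝ))
          = toLex (e (a : Fin n → ℝ)) - toLex (e (b : Fin n → ℝ)) := rfl
      rw [h5] at h3
      exact sub_pos.mp h3
    refine ⟨e, fun a b => ⟨hfwd a b, fun hab => ?_⟩⟩
    rcases (show r a b ∨ a = b ∨ r b a from by
      by_contra hc; push_neg at hc; exact hc.2.1 (hord.trichotomous a b hc.1 hc.2.2)) with h | h | h
    · exact h
    · subst h; exact absurd hab (lt_irrefl _)
    · exact absurd hab (lt_asymm (hfwd b a h))
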